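/- Let A and B be finite nonempty types, let e₀ and e₁ be the standard basis vectors of ℂ^A at two distinct elements 0 and 1 of A, and let U be a unitary matrix in Matrix.unitaryGroup (A × B) ℂ. For b ∈ {0,1} and φ : B → ℂ write ψ_b(φ) = U.mulVec (e_b ⊗ φ). If for every vector φ : B → ℂ the partial traces over A agree, ptrA (ψ₀ φ) = ptrA (ψ₁ φ), then there exists a unitary matrix S ∈ Matrix.unitaryGroup A ℂ such that for every φ : B → ℂ, (S ⊗ I).mulVec (ψ₀ φ) = ψ₁ φ. (In other words, if a quantum bit commitment scheme is perfectly concealing even for an arbitrary, possibly unknown, receiver state φ — the non-static case — then the committer can convert the commitment of 0 into the commitment of 1 by a local unitary, so the scheme is not binding.) -/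

import Mathlib

open scoped ComplexOrder
open Matrix

noncomputable section

/-- Partial trace over `A` of the outer product `|ψ⟩⟨ψ|`:
`(ptrA ψ) j q = ∑ i, ψ (i, j) * conj (ψ (i, q))`. -/
def ptrA {A B : Type*} [Fintype A] (ψ : A × B → ℂ) : Matrix B B ℂ :=
  fun j q => ∑ i : A, ψ (i, j) * (starRingEnd ℂ) (ψ (i, q))

/-- The Kronecker product `S ⊗ I` with the identity on `B`, as a matrix on `A × B`. -/
def kronId {A B : Type*} [DecidableEq B] (S : Matrix A A ℂ) : Matrix (A × B) (A × B) ℂ :=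
  Matrix.kroneckerMap (· * ·) S (1 : Matrix B B ℂ)

/-- `ptrA ψ` is a Gram matrix, hence positive semidefinite. -/
lemma ptrA_posSemidef {A B : Type*} [Fintype A] [Fintype B] (ψ : A × B → ℂ) :
    (ptrA ψ).PosSemidef := by
  set V : Matrix A B ℂ := Matrix.of fun i j => (starRingEnd ℂ) (ψ (i, j)) with hV
  have h := Matrix.posSemidef_conjTranspose_mul_self V
  have heq : ptrA ψ = Vᴴ * V := by
    ext j q
    simp [Matrix.mul_apply, Matrix.conjTranspose_apply, ptrA, hV, mul_comm]
  rw [heq]; exact h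

/-- The positive semidefinite square root of a positive semidefinite matrix
(the former Mathlib `Matrix.PosSemidef.sqrt`, removed upstream). -/
def Matrix.PosSemidef.sqrt {n : Type*} [Fintype n] [DecidableEq n] {A : Matrix n n ℂ}
    (hA : A.PosSemidef) : Matrix n n ℂ :=
  hA.1.eigenvectorUnitary.1 * diagonal ((↑) ∘ (√·) ∘ hA.1.eigenvalues) *
    (star hA.1.eigenvectorUnitary : Matrix n n ℂ)

lemma Matrix.PosSemidef.posSemidef_sqrt {n : Type*} [Fintype n] [DecidableEq n]
    {A : Matrix n n ℂ} (hA : A.PosSemidef) : hA.sqrt.PosSemidef := by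
  have hD : (diagonal ((↑) ∘ (√·) ∘ hA.1.eigenvalues : n → ℂ)).PosSemidef := by
    rw [posSemidef_diagonal_iff]
    intro i
    simp only [Function.comp_apply]
    exact_mod_cast Real.sqrt_nonneg _
  have h := hD.mul_mul_conjTranspose_same (hA.1.eigenvectorUnitary.1)
  unfold Matrix.PosSemidef.sqrt
  simpa [Matrix.star_eq_conjTranspose] using h

lemma sqrt_mul_mul_sqrt_posSemidef {B : Type*} [Fintype B] [DecidableEq B]
    {ρ σ : Matrix B B ℂ} (hρ : ρ.PosSemidef) (hσ : σ.PosSemidef) :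
    (hρ.sqrt * σ * hρ.sqrt).PosSemidef := by
  have h := hσ.mul_mul_conjTranspose_same hρ.sqrt
  rwa [hρ.posSemidef_sqrt.isHermitian.eq] at h

/-- The fidelity `F(ρ, σ) = tr √(√ρ * σ * √ρ)` of two positive semidefinite matrices. -/
def fidelity {B : Type*} [Fintype B] [DecidableEq B] {ρ σ : Matrix B B ℂ}
    (hρ : ρ.PosSemidef) (hσ : σ.PosSemidef) : ℝ :=
  ((sqrt_mul_mul_sqrt_posSemidef hρ hσ).sqrt.trace).re

/-! View `ψ : A × B → ℂ` as the matrix `M ψ : Matrix A B ℂ`: then `ptrA ψ = ((M ψ)ᴴ * M ψ)ᵀ`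
and `S ⊗ I` acts as `M ψ ↦ S * M ψ`. Concealment gives `(M ψ₀ φ)ᴴ * M ψ₀ φ = (M ψ₁ φ)ᴴ * M ψ₁ φ`,
and since `ψ₀, ψ₁` are linear in `φ`, polarization gives the same identity with two different
vectors `φ, φ'` on the two sides. Thus the columns of all the `M ψ₀ φ` have the same Gram matrix
as those of the `M ψ₁ φ`, and the isometry between their spans extends to a unitary of `ℂ^A`. -/

open LinearMap
open scoped InnerProductSpace

theorem exists_linearIsometryEquiv_apply_eq_of_norm_eq {𝕜 V E : Type*} [RCLike 𝕜]
    [AddCommGroup V] [Module 𝕜 V] [NormedAddCommGroup E] [InnerProductSpace 𝕜 E]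
    [FiniteDimensional 𝕜 E] (S T : V →ₗ[𝕜] E) (h : ∀ x, ‖S x‖ = ‖T x‖) :
    ∃ g : E ≃ₗᵢ[𝕜] E, ∀ x, g (S x) = T x := by
  obtain ⟨s, hs⟩ := S.rangeRestrict.exists_rightInverse_of_surjective S.range_rangeRestrict
  have hSs (y : range S) : S (s y) = y := congrArg Subtype.val (LinearMap.congr_fun hs y)
  have hTs (x : V) : T (s ⟨S x, mem_range_self S x⟩) = T x := by
    rw [← sub_eq_zero, ← map_sub, ← norm_eq_zero, ← h, map_sub, hSs, sub_self, norm_zero]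
  let L : range S →ₗᵢ[𝕜] E := ⟨T ∘ₗ s, fun y => by simp [← h, hSs]⟩
  refine ⟨L.extend.toLinearIsometryEquiv rfl, fun x => ?_⟩
  exact (L.extend_apply ⟨S x, mem_range_self S x⟩).trans (hTs x)

theorem exists_linearIsometryEquiv_apply_eq_of_gram_eq {𝕜 E ι : Type*} [RCLike 𝕜]
    [NormedAddCommGroup E] [InnerProductSpace 𝕜 E] [FiniteDimensional 𝕜 E] {v w : ι → E}
    (h : gram 𝕜 v = gram 𝕜 w) : ∃ g : E ≃ₗᵢ[𝕜] E, ∀ i, g (v i) = w i := by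
  have hvw (i j : ι) : ⟪v i, v j⟫_𝕜 = ⟪w i, w j⟫_𝕜 := by
    simpa only [gram_apply] using congr($h i j)
  have hinner (c : ι →₀ 𝕜) :
      ⟪Finsupp.linearCombination 𝕜 v c, Finsupp.linearCombination 𝕜 v c⟫_𝕜 =
        ⟪Finsupp.linearCombination 𝕜 w c, Finsupp.linearCombination 𝕜 w c⟫_𝕜 := by
    simp only [Finsupp.linearCombination_apply, Finsupp.sum_inner, Finsupp.inner_sum,
      inner_smul_left, inner_smul_right, hvw]
  obtain ⟨g, hg⟩ := exists_linearIsometryEquiv_apply_eq_of_norm_eq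
    (Finsupp.linearCombination 𝕜 v) (Finsupp.linearCombination 𝕜 w) fun c => by
      rw [norm_eq_sqrt_re_inner (𝕜 := 𝕜), hinner, ← norm_eq_sqrt_re_inner]
  exact ⟨g, fun i => by simpa using hg (Finsupp.single i 1)⟩

theorem exists_mem_unitaryGroup_mul_eq_of_conjTranspose_mul_eq {𝕜 m n ι : Type*} [RCLike 𝕜]
    [Fintype m] [DecidableEq m] {X Y : ι → Matrix m n 𝕜}
    (h : ∀ i j, (X i)ᴴ * X j = (Y i)ᴴ * Y j) : ∃ S ∈ unitaryGroup m 𝕜, ∀ i, S * X i = Y i := by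
  have hgram : gram 𝕜 (fun p : ι × n => WithLp.toLp 2 ((X p.1)ᵀ p.2)) =
      gram 𝕜 (fun p : ι × n => WithLp.toLp 2 ((Y p.1)ᵀ p.2)) := by
    ext p q
    simp only [gram_apply, inner_matrix_col_col, h]
  obtain ⟨g, hg⟩ := exists_linearIsometryEquiv_apply_eq_of_gram_eq hgram
  set S : Matrix m m 𝕜 := toEuclideanLin.symm g.toLinearMap
  have hS (x : m → 𝕜) : S *ᵥ x = (g (WithLp.toLp 2 x)).ofLp :=
    congrArg WithLp.ofLp
      (LinearMap.congr_fun (toEuclideanLin.apply_symm_apply g.toLinearMap) (WithLp.toLp 2 x))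
  refine ⟨S, ?_, fun i => ?_⟩
  · exact g.toMatrix_mem_unitaryGroup (EuclideanSpace.basisFun m 𝕜) (EuclideanSpace.basisFun m 𝕜)
  · ext a c
    change (S *ᵥ (X i)ᵀ c) a = _
    rw [hS, hg (i, c)]
    rfl

theorem conjTranspose_mul_eq_of_forall_conjTranspose_mul_self_eq {V m n : Type*} [Fintype m]
    [AddCommGroup V] [Module ℂ V] {F₀ F₁ : V →ₗ[ℂ] Matrix m n ℂ}
    (h : ∀ x, (F₀ x)ᴴ * F₀ x = (F₁ x)ᴴ * F₁ x) (x y : V) :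
    (F₀ x)ᴴ * F₀ y = (F₁ x)ᴴ * F₁ y := by
  have hsum := h (x + y)
  have hrot := h (x + Complex.I • y)
  simp only [map_add, map_smul, conjTranspose_add, conjTranspose_smul, Matrix.add_mul,
    Matrix.mul_add, Matrix.smul_mul, Matrix.mul_smul, Complex.star_def, Complex.conj_I]
    at hsum hrot
  linear_combination (norm := match_scalars <;> ring_nf <;> simp [Complex.I_sq])
    (1 / 2 : ℂ) • (hsum - h x - h y) - (Complex.I / 2) • (hrot - h x - h y)

section

variable {A B : Type*} [Fintype A]

theorem ptrA_eq_transpose_conjTranspose_mul (ψ : A × B → ℂ) :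
    ptrA ψ = ((of (Function.curry ψ))ᴴ * of (Function.curry ψ))ᵀ := by
  ext j q
  simp [ptrA, mul_apply, mul_comm]

variable [Fintype B] [DecidableEq B]

theorem kronId_mulVec (S : Matrix A A ℂ) (ψ : A × B → ℂ) :
    kronId S *ᵥ ψ = fun p => (S * of (Function.curry ψ)) p.1 p.2 := by
  ext ⟨i, j⟩
  simp [kronId, mulVec, dotProduct, Fintype.sum_prod_type, one_apply, mul_apply]

theorem exists_mem_unitaryGroup_kronId_mulVec_eq_of_ptrA_eq {V : Type*} [AddCommGroup V]
    [Module ℂ V] [DecidableEq A] (f₀ f₁ : V →ₗ[ℂ] A × B → ℂ)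
    (h : ∀ x, ptrA (f₀ x) = ptrA (f₁ x)) :
    ∃ S ∈ unitaryGroup A ℂ, ∀ x, kronId S *ᵥ f₀ x = f₁ x := by
  let reshape : (A × B → ℂ) →ₗ[ℂ] Matrix A B ℂ :=
    (ofLinearEquiv ℂ).toLinearMap ∘ₗ (LinearEquiv.curry ℂ ℂ A B).toLinearMap
  have hpolar := conjTranspose_mul_eq_of_forall_conjTranspose_mul_self_eq
    (F₀ := reshape ∘ₗ f₀) (F₁ := reshape ∘ₗ f₁) fun x => by
      have hx := h x
      rwa [ptrA_eq_transpose_conjTranspose_mul, ptrA_eq_transpose_conjTranspose_mul,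
        transpose_inj] at hx
  obtain ⟨S, hS, hSX⟩ := exists_mem_unitaryGroup_mul_eq_of_conjTranspose_mul_eq hpolar
  refine ⟨S, hS, fun x => ?_⟩
  rw [kronId_mulVec]
  ext ⟨i, j⟩
  exact congr($(hSX x) i j)

end

theorem nonstatic_concealing_not_binding_general
    {A B : Type*} [Fintype A] [Fintype B] [DecidableEq A] [DecidableEq B]
    (e₀ e₁ : A → ℂ)
    (U : Matrix.unitaryGroup (A × B) ℂ)
    (ψ₀ ψ₁ : (B → ℂ) → (A × B → ℂ))
    (hψ₀ : ∀ φ : B → ℂ, ψ₀ φ = (U : Matrix (A × B) (A × B) ℂ).mulVec (fun p => e₀ p.1 * φ p.2))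
    (hψ₁ : ∀ φ : B → ℂ, ψ₁ φ = (U : Matrix (A × B) (A × B) ℂ).mulVec (fun p => e₁ p.1 * φ p.2))
    (hconceal : ∀ φ : B → ℂ, ptrA (ψ₀ φ) = ptrA (ψ₁ φ)) :
    ∃ S ∈ Matrix.unitaryGroup A ℂ, ∀ φ : B → ℂ, (kronId S).mulVec (ψ₀ φ) = ψ₁ φ := by
  let commit (e : A → ℂ) : (B → ℂ) →ₗ[ℂ] A × B → ℂ :=
    (U : Matrix (A × B) (A × B) ℂ).mulVecLin ∘ₗ LinearMap.pi fun p => e p.1 • LinearMap.proj p.2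
  have h₀ : ψ₀ = commit e₀ := funext hψ₀
  have h₁ : ψ₁ = commit e₁ := funext hψ₁
  subst h₀ h₁
  exact exists_mem_unitaryGroup_kronId_mulVec_eq_of_ptrA_eq _ _ hconceal

/-- **MLC no-go theorem for non-static QBC.** If the commitment is perfectly concealing
for every receiver state `φ`, then a local unitary `S` on `A` converts the commitment of `0`
into the commitment of `1` for every `φ`, i.e. the scheme is not binding. -/
theorem nonstatic_concealing_not_binding
    {A B : Type*} [Fintype A] [Fintype B] [DecidableEq A] [DecidableEq B]
    [Nonempty A] [Nonempty B]
    (z o : A) (hzo : z ≠ o)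
    (e₀ e₁ : A → ℂ)
    (he₀ : e₀ = fun i => if i = z then 1 else 0)
    (he₁ : e₁ = fun i => if i = o then 1 else 0)
    (U : Matrix.unitaryGroup (A × B) ℂ)
    (ψ₀ ψ₁ : (B → ℂ) → (A × B → ℂ))
    (hψ₀ : ∀ φ : B → ℂ, ψ₀ φ = (U : Matrix (A × B) (A × B) ℂ).mulVec (fun p => e₀ p.1 * φ p.2))
    (hψ₁ : ∀ φ : B → ℂ, ψ₁ φ = (U : Matrix (A × B) (A × B) ℂ).mulVec (fun p => e₁ p.1 * φ p.2))
    (hconceal : ∀ φ : B → ℂ, ptrA (ψ₀ φ) = ptrA (ψ₁ φ)) :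
    ∃ S ∈ Matrix.unitaryGroup A ℂ, ∀ φ : B → ℂ, (kronId S).mulVec (ψ₀ φ) = ψ₁ φ :=
  nonstatic_concealing_not_binding_general e₀ e₁ U ψ₀ ψ₁ hψ₀ hψ₁ hconceal
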